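/- arXiv:2309.05009 — 4 statements merged into one kernel-verified Lean document; each statement's English description precedes it below -/
import Mathlib

section
/- The quotient M / M_I of a connected adjacency matrix M by a connected principal submatrix M_I is connected; conversely, if M / M_I is connected (with M_I connected), then M is connected. -/
open Matrix BigOperators
open scoped Classical

noncomputable section

/-- An adjacency matrix: symmetric with zero diagonal (entries in `ℕ`). -/
def IsAdj {ι : Type*} (M : Matrix ι ι ℕ) : Prop :=
  (∀ i j, M i j = M j i) ∧ ∀ i, M i i = 0

/-- Connectedness of the multigraph encoded by `M`. -/
def AdjConnected {ι : Type*} (M : Matrix ι ι ℕ) : Prop :=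
  ∀ i j : ι, Relation.ReflTransGen (fun a b => M a b ≠ 0) i j

/-- The principal submatrix `M_I`. -/
def restrict {ι : Type*} (M : Matrix ι ι ℕ) (I : Finset ι) :
    Matrix {x // x ∈ I} {x // x ∈ I} ℕ :=
  fun a b => M a.1 b.1

/-- The quotient `M / M_I`: the indices in `I` are collapsed to the single new
index `⊥` (denoted `1∗` in the paper, placed first), with collapsed entries
given by the column sums over `I`. -/
def quotAdj {ι : Type*} (M : Matrix ι ι ℕ) (I : Finset ι) :
    Matrix (WithBot {j : ι // j ∉ I}) (WithBot {j : ι // j ∉ I}) ℕ :=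
  fun x y =>
    WithBot.recBotCoe
      (WithBot.recBotCoe 0 (fun j => ∑ a ∈ I, M a j.1) y)
      (fun i => WithBot.recBotCoe (∑ a ∈ I, M i.1 a) (fun j => M i.1 j.1) y) x

/-!
A path in `M` projects to a path in `M / M_I`: each edge either stays inside `I` and disappears,
or survives, possibly as an edge at the collapsed index, whose entry is a sum containing it.
Conversely, send the collapsed index to a fixed `i₀ ∈ I`: an edge at it comes from an edge at
some `a ∈ I`, and the connected `M_I` joins `a` to `i₀`.
-/

def AdjReach {ι : Type*} (M : Matrix ι ι ℕ) : ι → ι → Prop :=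
  Relation.ReflTransGen (fun a b => M a b ≠ 0)

section Quotient

variable {ι : Type*} {M : Matrix ι ι ℕ} {I : Finset ι}

def quotProj (I : Finset ι) (i : ι) : WithBot {j : ι // j ∉ I} :=
  if h : i ∈ I then ⊥ else ↑(⟨i, h⟩ : {j : ι // j ∉ I})

def quotSection (i₀ : ι) : WithBot {j : ι // j ∉ I} → ι :=
  WithBot.recBotCoe i₀ Subtype.val

theorem quotProj_quotSection {i₀ : ι} (hi₀ : i₀ ∈ I) (x : WithBot {j : ι // j ∉ I}) :
    quotProj I (quotSection i₀ x) = x := by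
  induction x using WithBot.recBotCoe with
  | bot => simp [quotSection, quotProj, hi₀]
  | coe j => simp [quotSection, quotProj, j.2]

theorem quotSection_quotProj (i₀ i : ι) :
    quotSection i₀ (quotProj I i) = if i ∈ I then i₀ else i := by
  by_cases hi : i ∈ I <;> simp [quotSection, quotProj, hi]

theorem adjReach_of_mem (hIc : AdjConnected (restrict M I)) {a b : ι} (ha : a ∈ I) (hb : b ∈ I) :
    AdjReach M a b :=
  Relation.ReflTransGen.lift (p := fun x y => M x y ≠ 0) Subtype.val (fun _ _ h => h) _ _
    (hIc ⟨a, ha⟩ ⟨b, hb⟩)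

theorem adjReach_quotProj_of_ne_zero {a b : ι} (hab : M a b ≠ 0) :
    AdjReach (quotAdj M I) (quotProj I a) (quotProj I b) := by
  by_cases ha : a ∈ I <;> by_cases hb : b ∈ I <;>
    simp only [quotProj, ha, hb, dif_pos, dif_neg, not_false_iff]
  · exact .refl
  · exact .single fun h => hab (Finset.sum_eq_zero_iff.mp h a ha)
  · exact .single fun h => hab (Finset.sum_eq_zero_iff.mp h b hb)
  · exact .single hab

theorem adjReach_quotProj {a b : ι} (h : AdjReach M a b) :
    AdjReach (quotAdj M I) (quotProj I a) (quotProj I b) :=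
  Relation.ReflTransGen.lift' (quotProj I) (fun _ _ => adjReach_quotProj_of_ne_zero) _ _ h

theorem adjReach_quotSection_of_ne_zero (hIc : AdjConnected (restrict M I)) {i₀ : ι}
    (hi₀ : i₀ ∈ I) {x y : WithBot {j : ι // j ∉ I}} (h : quotAdj M I x y ≠ 0) :
    AdjReach M (quotSection i₀ x) (quotSection i₀ y) := by
  induction x using WithBot.recBotCoe with
  | bot =>
    induction y using WithBot.recBotCoe with
    | bot => exact absurd rfl h
    | coe j =>
      obtain ⟨a, ha, haj⟩ := Finset.exists_ne_zero_of_sum_ne_zero h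
      exact (adjReach_of_mem hIc hi₀ ha).tail haj
  | coe i =>
    induction y using WithBot.recBotCoe with
    | bot =>
      obtain ⟨a, ha, hia⟩ := Finset.exists_ne_zero_of_sum_ne_zero h
      exact (adjReach_of_mem hIc ha hi₀).head hia
    | coe j => exact .single h

theorem adjReach_quotSection (hIc : AdjConnected (restrict M I)) {i₀ : ι} (hi₀ : i₀ ∈ I)
    {x y : WithBot {j : ι // j ∉ I}} (h : AdjReach (quotAdj M I) x y) :
    AdjReach M (quotSection i₀ x) (quotSection i₀ y) :=
  Relation.ReflTransGen.lift' (quotSection i₀)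
    (fun _ _ => adjReach_quotSection_of_ne_zero hIc hi₀) _ _ h

theorem adjReach_self_quotSection_quotProj (hIc : AdjConnected (restrict M I)) {i₀ : ι}
    (hi₀ : i₀ ∈ I) (i : ι) : AdjReach M i (quotSection i₀ (quotProj I i)) := by
  rw [quotSection_quotProj]
  split_ifs with hi
  exacts [adjReach_of_mem hIc hi hi₀, .refl]

theorem adjReach_quotSection_quotProj_self (hIc : AdjConnected (restrict M I)) {i₀ : ι}
    (hi₀ : i₀ ∈ I) (i : ι) : AdjReach M (quotSection i₀ (quotProj I i)) i := by
  rw [quotSection_quotProj]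
  split_ifs with hi
  exacts [adjReach_of_mem hIc hi₀ hi, .refl]

end Quotient

theorem quotAdj_connected_iff_general (m : ℕ) (M : Matrix (Fin m) (Fin m) ℕ)
    (I : Finset (Fin m)) (hI : 2 ≤ I.card) (hIc : AdjConnected (restrict M I)) :
    AdjConnected (quotAdj M I) ↔ AdjConnected M := by
  obtain ⟨i₀, hi₀⟩ : I.Nonempty := Finset.card_pos.mp (by omega)
  refine ⟨fun hQ i j => ?_, fun hMc x y => ?_⟩
  · exact ((adjReach_self_quotSection_quotProj hIc hi₀ i).trans
      (adjReach_quotSection hIc hi₀ (hQ _ _))).trans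
      (adjReach_quotSection_quotProj_self hIc hi₀ j)
  · show AdjReach _ x y
    simpa only [quotProj_quotSection hi₀] using
      adjReach_quotProj (I := I) (hMc (quotSection i₀ x) (quotSection i₀ y))

/-- With `M_I` connected, the quotient `M / M_I` is connected iff `M` is. -/
theorem quotAdj_connected_iff (m : ℕ) (M : Matrix (Fin m) (Fin m) ℕ) (hM : IsAdj M)
    (I : Finset (Fin m)) (hI : 2 ≤ I.card) (hIc : AdjConnected (restrict M I)) :
    AdjConnected (quotAdj M I) ↔ AdjConnected M :=
  quotAdj_connected_iff_general m M I hI hIc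

end
end

section
/- Equivariance of insertion: let M, N be connected adjacency matrices of orders m, n, let 1 ≤ i ≤ m, ι_i a decomposing map of the i-th column of M into n columns, and σ, τ permutations of {1,…,n} and {1,…,m} respectively. Then the insertion (N ↪_{(i,ι_i)} M) is permutation-conjugate to (σ(N) ↪_{(τ⁻¹(i), σ(ι_i))} τ(M)). -/
open Matrix BigOperators
open scoped Classical

noncomputable section

/-- A decomposing map at position `i`: each entry `M j i` (`j ≠ i`) of the `i`-th
column is decomposed into an `n`-tuple of naturals summing to `M j i`. -/
def IsDecomp {m n : ℕ} (M : Matrix (Fin m) (Fin m) ℕ) (i : Fin m)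
    (dec : Fin m → Fin n → ℕ) : Prop :=
  ∀ j : Fin m, j ≠ i → ∑ b, dec j b = M j i

/-- The insertion `(N ↪_{(i,ιᵢ)} M)`: vertex `i` of `M` is replaced by `N`, and the
edge multiplicities `M j i` are redistributed to the vertices of `N` according to
the decomposing map `dec`. -/
def insertAdj {m n : ℕ} (N : Matrix (Fin n) (Fin n) ℕ) (M : Matrix (Fin m) (Fin m) ℕ)
    (i : Fin m) (dec : Fin m → Fin n → ℕ) :
    Matrix ({j : Fin m // j ≠ i} ⊕ Fin n) ({j : Fin m // j ≠ i} ⊕ Fin n) ℕ :=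
  fun x y =>
    match x, y with
    | Sum.inl j, Sum.inl k => M j.1 k.1
    | Sum.inl j, Sum.inr b => dec j.1 b
    | Sum.inr b, Sum.inl j => dec j.1 b
    | Sum.inr a, Sum.inr b => N a b

/-- Equivariance of the insertion: `(N ↪_{(i,ιᵢ)} M)` is permutation-conjugate to
`(σ(N) ↪_{(τ⁻¹(i), σ(ιᵢ))} τ(M))`. -/
theorem insertAdj_equivariant (m n : ℕ) (M : Matrix (Fin m) (Fin m) ℕ)
    (N : Matrix (Fin n) (Fin n) ℕ) (hM : IsAdj M) (hN : IsAdj N)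
    (hMc : AdjConnected M) (hNc : AdjConnected N) (i : Fin m)
    (dec : Fin m → Fin n → ℕ) (hdec : IsDecomp M i dec)
    (σ : Equiv.Perm (Fin n)) (τ : Equiv.Perm (Fin m)) :
    ∃ e : ({j : Fin m // j ≠ i} ⊕ Fin n) ≃ ({j : Fin m // j ≠ τ.symm i} ⊕ Fin n),
      insertAdj N M i dec =
        (insertAdj (N.submatrix ⇑σ ⇑σ) (M.submatrix ⇑τ ⇑τ) (τ.symm i)
          (fun j b => dec (τ j) (σ b))).submatrix e e := by
  refine ⟨Equiv.sumCongr
    ⟨fun j => ⟨τ.symm j.1, fun h => j.2 (by simpa using congrArg τ h)⟩,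
     fun j => ⟨τ j.1, fun h => j.2 (by simp [← h])⟩,
     fun j => by simp, fun j => by simp⟩ σ.symm, ?_⟩
  funext x y
  rcases x with j | a <;> rcases y with k | b <;>
    simp [insertAdj, Matrix.submatrix, Equiv.sumCongr]
end
end

section
/- The insertion of a connected adjacency matrix N into a connected adjacency matrix M at any position i via any decomposing map ι_i is again connected. -/
open Matrix BigOperators
open scoped Classical

noncomputable section

/-! Every vertex of the insertion reaches some vertex of `N`: a vertex `j ≠ i` of `M`
follows a path of `M` towards `i`, and the edge `a → i` by which it first reaches `i` has
nonzero multiplicity `M a i = ∑ b, dec a b`, so it survives as an edge from `a` to some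
vertex of `N`. The vertices of `N` reach each other inside `N`. Since `M` is symmetric, the
transpose of the insertion is the insertion of `Nᵀ` into `M`, and applying the same argument
there reverses the first step. -/

open Relation

abbrev AdjReachable {ι : Type*} (A : Matrix ι ι ℕ) : ι → ι → Prop :=
  ReflTransGen (fun a b => A a b ≠ 0)

theorem adjReachable_transpose {ι : Type*} {A : Matrix ι ι ℕ} {x y : ι} :
    AdjReachable Aᵀ x y ↔ AdjReachable A y x :=
  reflTransGen_swap

section Insertion

variable {m n : ℕ} {N : Matrix (Fin n) (Fin n) ℕ} {M : Matrix (Fin m) (Fin m) ℕ} {i : Fin m}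
  {dec : Fin m → Fin n → ℕ}

theorem insertAdj_transpose : (insertAdj N M i dec)ᵀ = insertAdj Nᵀ Mᵀ i dec := by
  ext (j | a) (k | b) <;> rfl

theorem adjReachable_insertAdj_inr (hN : AdjConnected N) (a b : Fin n) :
    AdjReachable (insertAdj N M i dec) (Sum.inr a) (Sum.inr b) :=
  (hN a b).lift Sum.inr fun _ _ h => h

theorem IsDecomp.exists_insertAdj_ne_zero (hdec : IsDecomp M i dec) {j : Fin m} (hj : j ≠ i)
    (hji : M j i ≠ 0) : ∃ b, insertAdj N M i dec (Sum.inl ⟨j, hj⟩) (Sum.inr b) ≠ 0 := by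
  obtain ⟨b, -, hb⟩ := Finset.exists_ne_zero_of_sum_ne_zero (hdec j hj ▸ hji)
  exact ⟨b, hb⟩

theorem IsDecomp.exists_adjReachable_inl_inr (hdec : IsDecomp M i dec) {j : Fin m}
    (hji : AdjReachable M j i) (hj : j ≠ i) :
    ∃ b, AdjReachable (insertAdj N M i dec) (Sum.inl ⟨j, hj⟩) (Sum.inr b) := by
  induction hji using ReflTransGen.head_induction_on with
  | refl => exact absurd rfl hj
  | @head j c hjc _ ih =>
    by_cases hc : c = i
    · subst hc
      obtain ⟨b, hb⟩ := hdec.exists_insertAdj_ne_zero hj hjc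
      exact ⟨b, .single hb⟩
    · obtain ⟨b, hcb⟩ := ih hc
      exact ⟨b, .head (b := Sum.inl ⟨c, hc⟩) (by exact hjc) hcb⟩

theorem IsDecomp.exists_adjReachable_inr (hdec : IsDecomp M i dec) (hM : AdjConnected M)
    (x : {j : Fin m // j ≠ i} ⊕ Fin n) : ∃ b, AdjReachable (insertAdj N M i dec) x (Sum.inr b) :=
  match x with
  | Sum.inl ⟨j, hj⟩ => hdec.exists_adjReachable_inl_inr (hM j i) hj
  | Sum.inr a => ⟨a, .refl⟩

end Insertion

theorem insertAdj_connected_general (m n : ℕ) (M : Matrix (Fin m) (Fin m) ℕ)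
    (N : Matrix (Fin n) (Fin n) ℕ) (hM : IsAdj M)
    (hMc : AdjConnected M) (hNc : AdjConnected N) (i : Fin m)
    (dec : Fin m → Fin n → ℕ) (hdec : IsDecomp M i dec) :
    AdjConnected (insertAdj N M i dec) := by
  have hMt : Mᵀ = M := Matrix.ext fun a b => hM.1 b a
  intro x y
  obtain ⟨a, hxa⟩ := hdec.exists_adjReachable_inr (N := N) hMc x
  obtain ⟨b, hyb⟩ := hdec.exists_adjReachable_inr (N := Nᵀ) hMc y
  have hby : AdjReachable (insertAdj N M i dec) (Sum.inr b) y := by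
    rw [← adjReachable_transpose, insertAdj_transpose, hMt]
    exact hyb
  exact hxa.trans ((adjReachable_insertAdj_inr hNc a b).trans hby)

/-- Inserting a connected adjacency matrix into a connected adjacency matrix
yields a connected adjacency matrix. -/
theorem insertAdj_connected (m n : ℕ) (hn : 0 < n) (M : Matrix (Fin m) (Fin m) ℕ)
    (N : Matrix (Fin n) (Fin n) ℕ) (hM : IsAdj M) (hN : IsAdj N)
    (hMc : AdjConnected M) (hNc : AdjConnected N) (i : Fin m)
    (dec : Fin m → Fin n → ℕ) (hdec : IsDecomp M i dec) :
    AdjConnected (insertAdj N M i dec) :=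
  insertAdj_connected_general m n M N hM hMc hNc i dec hdec

end
end

section
/- Insertion inverts the quotient: let M, N, Q be connected adjacency matrices of orders m, n, q with q = m+n−1. Then M is permutation-conjugate to Q / N (meaning Q / Q_I for some index set I with Q_I = N) if and only if there exists an index i ∈ {1,…,m} and a decomposing map ι_i such that Q is permutation-conjugate to the insertion (N ↪_{(i,ι_i)} M). -/
open Matrix BigOperators
open scoped Classical

noncomputable section

/-!
Both sides describe the same splitting of the vertices of `Q` into a copy of `N` (the block `I`,
resp. the inserted vertices) and a copy of `M` with the vertex `i = ⊥` removed, on which `Q`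
agrees with `N` and `M`. The remaining entries correspond as well: the decomposing map is the
off-diagonal block of `Q` between the two parts, and its row sums are the `i`-th column of `M`,
which is exactly how the collapsed vertex `⊥` of `Q / Q_I` is connected. Symmetry of `M` and `Q`
reduces everything to one of the two off-diagonal blocks.
-/

section QuotAdj

variable {κ : Type*} (Q : Matrix κ κ ℕ) (I : Finset κ) (k l : {x // x ∉ I})

@[simp] theorem quotAdj_bot_bot : quotAdj Q I ⊥ ⊥ = 0 := rfl

@[simp] theorem quotAdj_bot_coe : quotAdj Q I ⊥ l = ∑ a ∈ I, Q a l := rfl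

@[simp] theorem quotAdj_coe_bot : quotAdj Q I k ⊥ = ∑ a ∈ I, Q k a := rfl

@[simp] theorem quotAdj_coe_coe : quotAdj Q I k l = Q k l := rfl

end QuotAdj

section Blocks

variable {ι κ : Type*}

theorem forall_eq_apply_equiv_iff {R : Type*} (A : Matrix ι ι R) (B : Matrix κ κ R)
    (e : ι ≃ κ) :
    (∀ a b, A a b = B (e a) (e b)) ↔ ∀ x y, A (e.symm x) (e.symm y) = B x y :=
  ⟨fun h x y => by simpa using h (e.symm x) (e.symm y), fun h a b => by simpa using h (e a) (e b)⟩

theorem forall_eq_quotAdj_iff {M : Matrix ι ι ℕ} {Q : Matrix κ κ ℕ} (hM : IsAdj M)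
    (hQ : ∀ a b, Q a b = Q b a) {I : Finset κ} (e : ι ≃ WithBot {x // x ∉ I}) :
    (∀ a b, M a b = quotAdj Q I (e a) (e b)) ↔
      (∀ k : {x // x ∉ I}, M (e.symm k) (e.symm ⊥) = ∑ a ∈ I, Q k a) ∧
      ∀ k l : {x // x ∉ I}, M (e.symm k) (e.symm l) = Q k l := by
  have hcol (k : κ) : ∑ a ∈ I, Q a k = ∑ a ∈ I, Q k a := Finset.sum_congr rfl fun a _ => hQ a k
  rw [forall_eq_apply_equiv_iff]
  simp only [WithBot.forall, quotAdj_bot_bot, quotAdj_bot_coe, quotAdj_coe_bot, quotAdj_coe_coe,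
    hM.2, hM.1 (e.symm ⊥) (e.symm (WithBot.some _)), hcol, forall_and]
  tauto

theorem forall_eq_insertAdj_iff {m n : ℕ} {N : Matrix (Fin n) (Fin n) ℕ}
    {M : Matrix (Fin m) (Fin m) ℕ} {i : Fin m} {dec : Fin m → Fin n → ℕ} {Q : Matrix ι ι ℕ}
    (hQ : ∀ a b, Q a b = Q b a) (e : ι ≃ {j // j ≠ i} ⊕ Fin n) :
    (∀ a b, Q a b = insertAdj N M i dec (e a) (e b)) ↔
      (∀ j k, Q (e.symm (.inl j)) (e.symm (.inl k)) = M j k) ∧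
      (∀ j b, Q (e.symm (.inl j)) (e.symm (.inr b)) = dec j b) ∧
      ∀ a b, Q (e.symm (.inr a)) (e.symm (.inr b)) = N a b := by
  rw [forall_eq_apply_equiv_iff]
  simp only [Sum.forall, insertAdj, hQ (e.symm (.inr _)) (e.symm (.inl _)), forall_and]
  tauto

end Blocks

section Directions

variable {m n : ℕ} {ι : Type*} {M : Matrix (Fin m) (Fin m) ℕ} {N : Matrix (Fin n) (Fin n) ℕ}
  {Q : Matrix ι ι ℕ}

theorem exists_insertAdj_of_quotAdj (hQ : ∀ a b, Q a b = Q b a) {I : Finset ι}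
    (eI : Fin n ≃ {x // x ∈ I}) (eQ : Fin m ≃ WithBot {x // x ∉ I})
    (hNQ : ∀ a b, N a b = Q (eI a) (eI b)) (hMQ : ∀ a b, M a b = quotAdj Q I (eQ a) (eQ b)) :
    ∃ dec : Fin m → Fin n → ℕ, IsDecomp M (eQ.symm ⊥) dec ∧
      ∃ eP : ι ≃ {j // j ≠ eQ.symm ⊥} ⊕ Fin n,
        ∀ a b, Q a b = insertAdj N M (eQ.symm ⊥) dec (eP a) (eP b) := by
  set i := eQ.symm ⊥
  have hMbot (k : {x // x ∉ I}) : M (eQ.symm k) i = ∑ a ∈ I, Q k a := by simp [hMQ, i]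
  have hMcoe (k l : {x // x ∉ I}) : M (eQ.symm k) (eQ.symm l) = Q k l := by simp [hMQ]
  let e1 : {x // x ∉ I} ≃ {j // j ≠ i} := Equiv.optionSubtype i ⟨eQ.symm, rfl⟩
  let eP : ι ≃ {j // j ≠ i} ⊕ Fin n :=
    (Equiv.sumCompl (· ∈ I)).symm.trans ((Equiv.sumComm _ _).trans (Equiv.sumCongr e1 eI.symm))
  have heP_inl (k) : eP.symm (.inl (e1 k)) = k := by simp [eP]
  have heP_inr (b) : eP.symm (.inr b) = eI b := by simp [eP]
  let dec : Fin m → Fin n → ℕ := fun j b =>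
    if h : j = i then 0 else Q (eP.symm (.inl ⟨j, h⟩)) (eP.symm (.inr b))
  refine ⟨dec, fun j hj => ?_, eP, (forall_eq_insertAdj_iff hQ eP).2 ⟨?_, fun j b => ?_, ?_⟩⟩
  · obtain ⟨k, hk⟩ := e1.surjective ⟨j, hj⟩
    obtain rfl : eQ.symm k = j := congrArg Subtype.val hk
    rw [hMbot, ← I.sum_coe_sort, ← eI.sum_comp]
    simp only [dec, dif_neg hj, ← hk, heP_inl, heP_inr]
  · refine e1.forall_congr_right.1 fun k => e1.forall_congr_right.1 fun l => ?_
    rw [heP_inl, heP_inl]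
    exact (hMcoe k l).symm
  · simp only [dec, dif_neg j.2, Subtype.coe_eta]
  · intro a b
    rw [heP_inr, heP_inr, hNQ]

theorem exists_quotAdj_of_insertAdj [Fintype ι] (hM : IsAdj M) (hQ : ∀ a b, Q a b = Q b a)
    {i : Fin m} {dec : Fin m → Fin n → ℕ} (hdec : IsDecomp M i dec)
    (eP : ι ≃ {j // j ≠ i} ⊕ Fin n) (hQP : ∀ a b, Q a b = insertAdj N M i dec (eP a) (eP b)) :
    ∃ (I : Finset ι) (eI : Fin n ≃ {x // x ∈ I}) (eQ : Fin m ≃ WithBot {x // x ∉ I}),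
      (∀ a b, N a b = Q (eI a) (eI b)) ∧ ∀ a b, M a b = quotAdj Q I (eQ a) (eQ b) := by
  obtain ⟨hMP, hdecP, hNP⟩ := (forall_eq_insertAdj_iff hQ eP).1 hQP
  let I : Finset ι := {x | (eP x).isRight}
  let eI : Fin n ≃ {x // x ∈ I} :=
    ((eP.subtypeEquiv fun x => by simp [I]).trans Equiv.sumIsRight).symm
  let e1 : {x // x ∉ I} ≃ {j // j ≠ i} :=
    (eP.subtypeEquiv fun x => by simp [I]).trans Equiv.sumIsLeft
  let eQ : Fin m ≃ WithBot {x // x ∉ I} := ((Equiv.optionSubtype i).symm e1).1.symm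
  have heI (b) : (eI b).1 = eP.symm (.inr b) := rfl
  have he1 (k) : eP.symm (.inl (e1 k)) = k := by simp [e1]
  refine ⟨I, eI, eQ, fun a b => by rw [heI, heI, hNP],
    (forall_eq_quotAdj_iff hM hQ eQ).2 ⟨fun k => ?_, fun k l => ?_⟩⟩
  · show M (e1 k) i = _
    rw [← hdec _ (e1 k).2, ← I.sum_coe_sort, ← eI.sum_comp]
    simp only [← hdecP, he1, heI]
  · show M (e1 k) (e1 l) = _
    rw [← hMP, he1, he1]

end Directions

theorem quotAdj_iff_insertAdj_general (m n q : ℕ)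
    (M : Matrix (Fin m) (Fin m) ℕ) (N : Matrix (Fin n) (Fin n) ℕ)
    (Q : Matrix (Fin q) (Fin q) ℕ) (hM : IsAdj M) (hQ : IsAdj Q) :
    (∃ (I : Finset (Fin q)) (eI : Fin n ≃ {x : Fin q // x ∈ I})
        (eQ : Fin m ≃ WithBot {j : Fin q // j ∉ I}),
      (∀ a b : Fin n, N a b = Q (eI a).1 (eI b).1) ∧
      (∀ a b : Fin m, M a b = quotAdj Q I (eQ a) (eQ b))) ↔
    (∃ (i : Fin m) (dec : Fin m → Fin n → ℕ), IsDecomp M i dec ∧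
      ∃ eP : Fin q ≃ ({j : Fin m // j ≠ i} ⊕ Fin n),
        ∀ a b : Fin q, Q a b = insertAdj N M i dec (eP a) (eP b)) :=
  ⟨fun ⟨_, eI, eQ, hNQ, hMQ⟩ => ⟨eQ.symm ⊥, exists_insertAdj_of_quotAdj hQ.1 eI eQ hNQ hMQ⟩,
    fun ⟨_, _, hdec, eP, hQP⟩ => exists_quotAdj_of_insertAdj hM hQ.1 hdec eP hQP⟩

/-- Insertion inverts the quotient: `M ∼ Q / N` (i.e. `M` is, up to permutation,
the quotient of `Q` by a principal submatrix which is a copy of `N`) iff `Q` is,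
up to permutation, an insertion of `N` into `M`. -/
theorem quotAdj_iff_insertAdj (m n q : ℕ) (hq : q + 1 = m + n)
    (M : Matrix (Fin m) (Fin m) ℕ) (N : Matrix (Fin n) (Fin n) ℕ)
    (Q : Matrix (Fin q) (Fin q) ℕ) (hM : IsAdj M) (hN : IsAdj N) (hQ : IsAdj Q)
    (hMc : AdjConnected M) (hNc : AdjConnected N) (hQc : AdjConnected Q) :
    (∃ (I : Finset (Fin q)) (eI : Fin n ≃ {x : Fin q // x ∈ I})
        (eQ : Fin m ≃ WithBot {j : Fin q // j ∉ I}),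
      (∀ a b : Fin n, N a b = Q (eI a).1 (eI b).1) ∧
      (∀ a b : Fin m, M a b = quotAdj Q I (eQ a) (eQ b))) ↔
    (∃ (i : Fin m) (dec : Fin m → Fin n → ℕ), IsDecomp M i dec ∧
      ∃ eP : Fin q ≃ ({j : Fin m // j ≠ i} ⊕ Fin n),
        ∀ a b : Fin q, Q a b = insertAdj N M i dec (eP a) (eP b)) :=
  quotAdj_iff_insertAdj_general m n q M N Q hM hQ

end
end
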